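/- arXiv:1508.05168 — 3 statements merged into one kernel-verified Lean document; each statement's English description precedes it below -/
import Mathlib

section
/- Let H be a real or complex Hilbert space with orthonormal basis ℍ, let A be a symmetric diagonal linear operator on H with inf of its point spectrum strictly positive, and let (Hᵣ)_{r∈ℝ} be the family of interpolation spaces associated to A. Then for all r ∈ ℝ, v ∈ Hᵣ, and s ≥ −r it holds that ‖v‖_{Hᵣ} = sup_{w ∈ span(ℍ) \ {0}} |⟨w,v⟩_{H₀}| / ‖w‖_{H_{−r}} = sup_{w ∈ H_s \ {0}} |⟨w,v⟩_{H₀}| / ‖w‖_{H_{−r}}. -/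
open Real

private lemma rpow_sq' {x : ℝ} (hx : 0 < x) (p : ℝ) : (x ^ p) ^ 2 = x ^ (2 * p) := by
  rw [sq, ← Real.rpow_add hx, two_mul]

private lemma myCS {ι : Type*} {a b : ι → ℝ} (ha0 : ∀ h, 0 ≤ a h) (hb0 : ∀ h, 0 ≤ b h)
    (ha : Summable fun h => a h ^ 2) (hb : Summable fun h => b h ^ 2) :
    Summable (fun h => a h * b h) ∧
      ∑' h, a h * b h ≤ Real.sqrt (∑' h, a h ^ 2) * Real.sqrt (∑' h, b h ^ 2) := by
  have hsum : Summable (fun h => a h * b h) := by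
    refine Summable.of_nonneg_of_le (fun h => mul_nonneg (ha0 h) (hb0 h))
      (fun h => ?_) ((ha.add hb).div_const 2)
    nlinarith [sq_nonneg (a h - b h)]
  refine ⟨hsum, Summable.tsum_le_of_sum_le hsum fun F => ?_⟩
  calc ∑ h ∈ F, a h * b h ≤ √(∑ h ∈ F, a h ^ 2) * √(∑ h ∈ F, b h ^ 2) :=
        Real.sum_mul_le_sqrt_mul_sqrt F a b
    _ ≤ _ := mul_le_mul (Real.sqrt_le_sqrt (Summable.sum_le_tsum F (fun i _ => sq_nonneg _) ha))
        (Real.sqrt_le_sqrt (Summable.sum_le_tsum F (fun i _ => sq_nonneg _) hb))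
        (Real.sqrt_nonneg _) (Real.sqrt_nonneg _)

/-- (Coordinate model.)  Let `H` be a `𝕜`-Hilbert space (`𝕜 ∈ {ℝ, ℂ}`) with
orthonormal basis `ℍ = ι` and let `A` be a symmetric diagonal operator with eigenvalues
`λ_h ≥ λ₀ > 0`.  In coordinates with respect to `ℍ`, a vector `v ∈ H_r` is a sequence
`v : ι → 𝕜` with `‖v‖²_{H_r} = ∑_h λ_h^{2r} ‖v_h‖² < ∞`, the span of `ℍ` consists of the
finitely supported sequences, the pairing is `⟨w, v⟩_{H₀} = ∑_h conj(w_h) v_h`, and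
`‖w‖²_{H_{-r}} = ∑_h λ_h^{-2r} ‖w_h‖²`.  Claim: for all `r ∈ ℝ`, `v ∈ H_r`, and `s ≥ -r`,
`‖v‖_{H_r} = sup_{0 ≠ w ∈ span ℍ} |⟨w,v⟩_{H₀}| / ‖w‖_{H_{-r}}
          = sup_{0 ≠ w ∈ H_s} |⟨w,v⟩_{H₀}| / ‖w‖_{H_{-r}}`. -/
theorem stmt5_dual_norm_characterization
    (𝕜 : Type*) [RCLike 𝕜] {ι : Type*}
    (lam : ι → ℝ) (lam0 : ℝ) (h0 : 0 < lam0) (hlam : ∀ h, lam0 ≤ lam h)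
    (r s : ℝ) (hs : -r ≤ s)
    (v : ι → 𝕜) (hv : Summable fun h => lam h ^ (2 * r) * ‖v h‖ ^ 2) :
    Real.sqrt (∑' h, lam h ^ (2 * r) * ‖v h‖ ^ 2)
      = sSup {c : ℝ | ∃ w : ι →₀ 𝕜, w ≠ 0 ∧
          c = ‖∑ h ∈ w.support, (starRingEnd 𝕜) (w h) * v h‖ /
              Real.sqrt (∑ h ∈ w.support, lam h ^ (-(2 * r)) * ‖w h‖ ^ 2)} ∧
    Real.sqrt (∑' h, lam h ^ (2 * r) * ‖v h‖ ^ 2)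
      = sSup {c : ℝ | ∃ w : ι → 𝕜, w ≠ 0 ∧
          (Summable fun h => lam h ^ (2 * s) * ‖w h‖ ^ 2) ∧
          c = ‖∑' h, (starRingEnd 𝕜) (w h) * v h‖ /
              Real.sqrt (∑' h, lam h ^ (-(2 * r)) * ‖w h‖ ^ 2)} := by
  classical
  have hpos : ∀ h, 0 < lam h := fun h => lt_of_lt_of_le h0 (hlam h)
  have hterm_nonneg : ∀ h, 0 ≤ lam h ^ (2 * r) * ‖v h‖ ^ 2 := fun h =>
    mul_nonneg (Real.rpow_nonneg (hpos h).le _) (sq_nonneg _)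
  set N := Real.sqrt (∑' h, lam h ^ (2 * r) * ‖v h‖ ^ 2) with hNdef
  set S1 := {c : ℝ | ∃ w : ι →₀ 𝕜, w ≠ 0 ∧
          c = ‖∑ h ∈ w.support, (starRingEnd 𝕜) (w h) * v h‖ /
              Real.sqrt (∑ h ∈ w.support, lam h ^ (-(2 * r)) * ‖w h‖ ^ 2)} with hS1def
  set S2 := {c : ℝ | ∃ w : ι → 𝕜, w ≠ 0 ∧
          (Summable fun h => lam h ^ (2 * s) * ‖w h‖ ^ 2) ∧
          c = ‖∑' h, (starRingEnd 𝕜) (w h) * v h‖ /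
              Real.sqrt (∑' h, lam h ^ (-(2 * r)) * ‖w h‖ ^ 2)} with hS2def
  -- the pointwise norm factorization
  have hfact : ∀ (w : ι → 𝕜) (h : ι), ‖(starRingEnd 𝕜) (w h) * v h‖
      = (lam h ^ (-r) * ‖w h‖) * (lam h ^ r * ‖v h‖) := by
    intro w h
    have h1 : lam h ^ (-r) * lam h ^ r = 1 := by
      rw [← Real.rpow_add (hpos h)]; simp
    rw [norm_mul, RCLike.norm_conj]
    calc ‖w h‖ * ‖v h‖ = (lam h ^ (-r) * lam h ^ r) * (‖w h‖ * ‖v h‖) := by rw [h1, one_mul]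
      _ = _ := by ring
  have hsqa : ∀ (w : ι → 𝕜) (h : ι), (lam h ^ (-r) * ‖w h‖) ^ 2
      = lam h ^ (-(2 * r)) * ‖w h‖ ^ 2 := by
    intro w h
    rw [mul_pow, rpow_sq' (hpos h), mul_neg]
  have hsqb : ∀ h, (lam h ^ r * ‖v h‖) ^ 2 = lam h ^ (2 * r) * ‖v h‖ ^ 2 := by
    intro h
    rw [mul_pow, rpow_sq' (hpos h)]
  -- finite upper bound
  have UB1 : ∀ (F : Finset ι) (w : ι → 𝕜),
      ‖∑ h ∈ F, (starRingEnd 𝕜) (w h) * v h‖ ≤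
        Real.sqrt (∑ h ∈ F, lam h ^ (-(2 * r)) * ‖w h‖ ^ 2) * N := by
    intro F w
    have step1 : ‖∑ h ∈ F, (starRingEnd 𝕜) (w h) * v h‖
        ≤ ∑ h ∈ F, (lam h ^ (-r) * ‖w h‖) * (lam h ^ r * ‖v h‖) :=
      (norm_sum_le _ _).trans (le_of_eq (Finset.sum_congr rfl fun h _ => hfact w h))
    have step2 := Real.sum_mul_le_sqrt_mul_sqrt F (fun h => lam h ^ (-r) * ‖w h‖)
      (fun h => lam h ^ r * ‖v h‖)
    rw [show (∑ h ∈ F, (lam h ^ (-r) * ‖w h‖) ^ 2) = ∑ h ∈ F, lam h ^ (-(2 * r)) * ‖w h‖ ^ 2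
          from Finset.sum_congr rfl fun h _ => hsqa w h,
        show (∑ h ∈ F, (lam h ^ r * ‖v h‖) ^ 2) = ∑ h ∈ F, lam h ^ (2 * r) * ‖v h‖ ^ 2
          from Finset.sum_congr rfl fun h _ => hsqb h] at step2
    have step3 : Real.sqrt (∑ h ∈ F, lam h ^ (2 * r) * ‖v h‖ ^ 2) ≤ N :=
      Real.sqrt_le_sqrt (Summable.sum_le_tsum F (fun i _ => hterm_nonneg i) hv)
    exact step1.trans (step2.trans (mul_le_mul_of_nonneg_left step3 (Real.sqrt_nonneg _)))
  -- all elements of S1 are ≤ N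
  have hUB1 : ∀ c ∈ S1, c ≤ N := by
    rintro c ⟨w, hw, rfl⟩
    obtain ⟨h₀, hh₀⟩ := Finsupp.ne_iff.mp hw
    have hD : 0 < ∑ h ∈ w.support, lam h ^ (-(2 * r)) * ‖w h‖ ^ 2 := by
      refine Finset.sum_pos' (fun h _ => mul_nonneg (Real.rpow_nonneg (hpos h).le _) (sq_nonneg _))
        ⟨h₀, Finsupp.mem_support_iff.mpr (by simpa using hh₀), ?_⟩
      have : (0:𝕜) = 0 := rfl
      exact mul_pos (Real.rpow_pos_of_pos (hpos h₀) _)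
        (pow_pos (norm_pos_iff.mpr (by simpa using hh₀)) 2)
    rw [div_le_iff₀ (Real.sqrt_pos.mpr hD)]
    exact (UB1 w.support w).trans (le_of_eq (mul_comm _ _))
  have hbdd1 : BddAbove S1 := ⟨N, fun c hc => hUB1 c hc⟩
  rcases isEmpty_or_nonempty ι with hι | hι
  · -- empty index type
    have ht0 : (∑' h, lam h ^ (2 * r) * ‖v h‖ ^ 2) = 0 := tsum_empty
    have hS1e : S1 = ∅ := by
      rw [hS1def, Set.eq_empty_iff_forall_notMem]
      rintro c ⟨w, hw, -⟩
      exact hw (Finsupp.ext fun a => isEmptyElim a)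
    have hS2e : S2 = ∅ := by
      rw [hS2def, Set.eq_empty_iff_forall_notMem]
      rintro c ⟨w, hw, -⟩
      exact hw (funext fun a => isEmptyElim a)
    rw [hNdef]
    constructor
    · rw [hS1e, Real.sSup_empty, ht0, Real.sqrt_zero]
    · rw [hS2e, Real.sSup_empty, ht0, Real.sqrt_zero]
  -- nonempty index type
  obtain ⟨i⟩ := hι
  have hS1ne : S1.Nonempty := by
    refine ⟨_, Finsupp.single i (1:𝕜), fun e => one_ne_zero (Finsupp.single_eq_zero.mp e), rfl⟩
  have hS1nonneg : ∀ c ∈ S1, 0 ≤ c := by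
    rintro c ⟨w, hw, rfl⟩
    positivity
  have hL0 : 0 ≤ sSup S1 := by
    obtain ⟨c₀, hc₀⟩ := hS1ne
    exact (hS1nonneg c₀ hc₀).trans (le_csSup hbdd1 hc₀)
  -- membership of partial-sum square roots
  have hmem : ∀ F : Finset ι, 0 < (∑ h ∈ F, lam h ^ (2 * r) * ‖v h‖ ^ 2) →
      Real.sqrt (∑ h ∈ F, lam h ^ (2 * r) * ‖v h‖ ^ 2) ∈ S1 := by
    intro F hF
    obtain ⟨h₀, hh₀F, hh₀⟩ : ∃ h ∈ F, 0 < lam h ^ (2 * r) * ‖v h‖ ^ 2 := by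
      by_contra hcon
      push_neg at hcon
      have : (∑ h ∈ F, lam h ^ (2 * r) * ‖v h‖ ^ 2)
          ≤ ∑ h ∈ F, (0:ℝ) := Finset.sum_le_sum fun h hh =>
        le_antisymm (hcon h hh) (hterm_nonneg h) |>.le
      simp at this
      linarith
    have hv₀ : v h₀ ≠ 0 := by
      intro e; rw [e] at hh₀; simp at hh₀
    set f : ι → 𝕜 := fun h => if h ∈ F then ((lam h ^ (2 * r) : ℝ) : 𝕜) * v h else 0 with hfdef
    have hf0 : ∀ h, f h ≠ 0 → h ∈ F := by
      intro h hne
      by_contra hF'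
      simp [hfdef, hF'] at hne
    set w : ι →₀ 𝕜 := Finsupp.onFinset F f hf0 with hwdef
    have hwcoe : ∀ h, w h = f h := fun h => rfl
    have hwh₀ : w h₀ ≠ 0 := by
      rw [hwcoe, hfdef]
      simp only [if_pos hh₀F]
      refine mul_ne_zero ?_ hv₀
      rw [ne_eq, RCLike.ofReal_eq_zero]
      exact ne_of_gt (Real.rpow_pos_of_pos (hpos h₀) _)
    have hsub : w.support ⊆ F := Finsupp.support_onFinset_subset
    refine ⟨w, fun e => hwh₀ (by rw [e]; rfl), ?_⟩
    have e1 : (∑ h ∈ w.support, (starRingEnd 𝕜) (w h) * v h)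
        = ∑ h ∈ F, (starRingEnd 𝕜) (w h) * v h :=
      Finset.sum_subset hsub (fun h _ hns => by
        rw [Finsupp.notMem_support_iff.mp hns]; simp)
    have e1' : (∑ h ∈ F, (starRingEnd 𝕜) (w h) * v h)
        = ((∑ h ∈ F, lam h ^ (2 * r) * ‖v h‖ ^ 2 : ℝ) : 𝕜) := by
      rw [RCLike.ofReal_sum]
      refine Finset.sum_congr rfl fun h hF' => ?_
      rw [hwcoe, hfdef]
      simp only [if_pos hF']
      rw [map_mul, RCLike.conj_ofReal, mul_assoc, RCLike.conj_mul]
      push_cast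
      ring
    have e2 : (∑ h ∈ w.support, lam h ^ (-(2 * r)) * ‖w h‖ ^ 2)
        = ∑ h ∈ F, lam h ^ (2 * r) * ‖v h‖ ^ 2 := by
      rw [Finset.sum_subset hsub (fun h _ hns => by
        rw [Finsupp.notMem_support_iff.mp hns]; simp)]
      refine Finset.sum_congr rfl fun h hF' => ?_
      rw [hwcoe, hfdef]
      simp only [if_pos hF']
      rw [norm_mul, RCLike.norm_ofReal,
        abs_of_pos (Real.rpow_pos_of_pos (hpos h) _), mul_pow, rpow_sq' (hpos h),
        ← mul_assoc, ← mul_assoc, ← Real.rpow_add (hpos h),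
        show -(2 * r) + 2 * 2 * r = 2 * r by ring]
    rw [e1, e1', e2, RCLike.norm_ofReal, abs_of_pos hF, Real.div_sqrt]
  -- N ≤ sSup S1
  have hNle1 : N ≤ sSup S1 := by
    have key : (∑' h, lam h ^ (2 * r) * ‖v h‖ ^ 2) ≤ (sSup S1) ^ 2 := by
      refine Summable.tsum_le_of_sum_le hv fun F => ?_
      rcases (Finset.sum_nonneg fun h _ => hterm_nonneg h).eq_or_lt with h | h
      · rw [← h]; exact sq_nonneg _
      · have hmemF := hmem F h
        have hle := le_csSup hbdd1 hmemF
        nlinarith [Real.sq_sqrt h.le, Real.sqrt_nonneg (∑ h ∈ F, lam h ^ (2 * r) * ‖v h‖ ^ 2)]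
    calc N ≤ Real.sqrt ((sSup S1) ^ 2) := Real.sqrt_le_sqrt key
      _ = sSup S1 := Real.sqrt_sq hL0
  have eq1 : N = sSup S1 := le_antisymm hNle1 (csSup_le hS1ne hUB1)
  -- Part 2
  have hsub12 : S1 ⊆ S2 := by
    rintro c ⟨w, hw, rfl⟩
    refine ⟨w, ?_, ?_, ?_⟩
    · intro e
      exact hw (Finsupp.ext fun a => by simpa using congrFun e a)
    · exact summable_of_ne_finset_zero (s := w.support) (fun h hh => by
        rw [Finsupp.notMem_support_iff.mp hh]; simp)
    · rw [tsum_eq_sum (s := w.support) (fun h hh => by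
          rw [Finsupp.notMem_support_iff.mp hh]; simp),
        tsum_eq_sum (s := w.support) (fun h hh => by
          rw [Finsupp.notMem_support_iff.mp hh]; simp)]
  have hUB2 : ∀ c ∈ S2, c ≤ N := by
    rintro c ⟨w, hw, hws, rfl⟩
    have hz : -(2 * r) - 2 * s ≤ 0 := by linarith
    have hcomp : ∀ h, lam h ^ (-(2 * r)) * ‖w h‖ ^ 2
        ≤ lam0 ^ (-(2 * r) - 2 * s) * (lam h ^ (2 * s) * ‖w h‖ ^ 2) := by
      intro h
      have hsplit : lam h ^ (-(2 * r)) = lam h ^ (-(2 * r) - 2 * s) * lam h ^ (2 * s) := by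
        rw [← Real.rpow_add (hpos h)]; ring_nf
      have hle : lam h ^ (-(2 * r) - 2 * s) ≤ lam0 ^ (-(2 * r) - 2 * s) :=
        Real.rpow_le_rpow_of_nonpos h0 (hlam h) hz
      rw [hsplit, mul_assoc]
      exact mul_le_mul_of_nonneg_right hle
        (mul_nonneg (Real.rpow_nonneg (hpos h).le _) (sq_nonneg _))
    have hDsum : Summable (fun h => lam h ^ (-(2 * r)) * ‖w h‖ ^ 2) :=
      Summable.of_nonneg_of_le
        (fun h => mul_nonneg (Real.rpow_nonneg (hpos h).le _) (sq_nonneg _))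
        hcomp (hws.mul_left _)
    obtain ⟨h₀, hh₀⟩ := Function.ne_iff.mp hw
    have hh₀' : w h₀ ≠ 0 := by simpa using hh₀
    have hD : 0 < ∑' h, lam h ^ (-(2 * r)) * ‖w h‖ ^ 2 :=
      Summable.tsum_pos hDsum
        (fun h => mul_nonneg (Real.rpow_nonneg (hpos h).le _) (sq_nonneg _)) h₀
        (mul_pos (Real.rpow_pos_of_pos (hpos h₀) _)
          (pow_pos (norm_pos_iff.mpr hh₀') 2))
    have ha2 : (fun h => (lam h ^ (-r) * ‖w h‖) ^ 2)
        = fun h => lam h ^ (-(2 * r)) * ‖w h‖ ^ 2 := funext fun h => hsqa w h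
    have hb2 : (fun h => (lam h ^ r * ‖v h‖) ^ 2)
        = fun h => lam h ^ (2 * r) * ‖v h‖ ^ 2 := funext fun h => hsqb h
    have hCS := myCS (a := fun h => lam h ^ (-r) * ‖w h‖) (b := fun h => lam h ^ r * ‖v h‖)
      (fun h => mul_nonneg (Real.rpow_nonneg (hpos h).le _) (norm_nonneg _))
      (fun h => mul_nonneg (Real.rpow_nonneg (hpos h).le _) (norm_nonneg _))
      (ha2 ▸ hDsum) (hb2 ▸ hv)
    have hnsum : Summable fun h => ‖(starRingEnd 𝕜) (w h) * v h‖ :=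
      hCS.1.congr fun h => (hfact w h).symm
    rw [div_le_iff₀ (Real.sqrt_pos.mpr hD)]
    calc ‖∑' h, (starRingEnd 𝕜) (w h) * v h‖
        ≤ ∑' h, ‖(starRingEnd 𝕜) (w h) * v h‖ := norm_tsum_le_tsum_norm hnsum
      _ = ∑' h, (lam h ^ (-r) * ‖w h‖) * (lam h ^ r * ‖v h‖) := tsum_congr fun h => hfact w h
      _ ≤ Real.sqrt (∑' h, (lam h ^ (-r) * ‖w h‖) ^ 2)
            * Real.sqrt (∑' h, (lam h ^ r * ‖v h‖) ^ 2) := hCS.2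
      _ = Real.sqrt (∑' h, lam h ^ (-(2 * r)) * ‖w h‖ ^ 2) * N := by rw [ha2, hb2]
      _ = N * Real.sqrt (∑' h, lam h ^ (-(2 * r)) * ‖w h‖ ^ 2) := mul_comm _ _
  have hbdd2 : BddAbove S2 := ⟨N, fun c hc => hUB2 c hc⟩
  have hS2ne : S2.Nonempty := hS1ne.mono hsub12
  refine ⟨eq1, le_antisymm ?_ (csSup_le hS2ne hUB2)⟩
  rw [eq1]
  exact csSup_le_csSup hbdd2 hS1ne hsub12
end

section
/- In the same diagonal-operator setting: for all v in some Hₛ (s ∈ ℝ) and all r ∈ ℝ, v belongs to Hᵣ if and only if sup_{w ∈ span(ℍ) \ {0}} |⟨w,v⟩_{H₀}| / ‖w‖_{H_{−r}} < ∞. -/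
open Real

private lemma rp_sq (x : ℝ) (hx : 0 < x) (t : ℝ) : x ^ (2*t) = (x ^ t)^2 := by
  rw [two_mul, Real.rpow_add hx, sq]

/-- (Coordinate model.)  Same diagonal-operator setting as in Statement 5:
`H` is a `𝕜`-Hilbert space with orthonormal basis `ℍ = ι`, `A` is diagonal with eigenvalues
`λ_h ≥ λ₀ > 0`, and in coordinates `H_t = {v : ι → 𝕜 : ∑_h λ_h^{2t} ‖v_h‖² < ∞}` with the
pairing `⟨w, v⟩_{H₀} = ∑_h conj(w_h) v_h` for finitely supported `w` (the span of `ℍ`).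
Claim: for every `v ∈ H_s` (`s ∈ ℝ`) and every `r ∈ ℝ`, `v` belongs to `H_r` if and only if
`sup_{0 ≠ w ∈ span ℍ} |⟨w,v⟩_{H₀}| / ‖w‖_{H_{-r}} < ∞`. -/
theorem stmt6_membership_iff_dual_bound
    (𝕜 : Type*) [RCLike 𝕜] {ι : Type*}
    (lam : ι → ℝ) (lam0 : ℝ) (h0 : 0 < lam0) (hlam : ∀ h, lam0 ≤ lam h)
    (s r : ℝ) (v : ι → 𝕜) (hv : Summable fun h => lam h ^ (2 * s) * ‖v h‖ ^ 2) :
    (Summable fun h => lam h ^ (2 * r) * ‖v h‖ ^ 2) ↔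
      (∃ C : ℝ, ∀ w : ι →₀ 𝕜, w ≠ 0 →
        ‖∑ h ∈ w.support, (starRingEnd 𝕜) (w h) * v h‖ /
            Real.sqrt (∑ h ∈ w.support, lam h ^ (-(2 * r)) * ‖w h‖ ^ 2) ≤ C) := by
  classical
  have hpos : ∀ h, 0 < lam h := fun h => lt_of_lt_of_le h0 (hlam h)
  constructor
  · intro hr
    refine ⟨Real.sqrt (∑' h, lam h ^ (2*r) * ‖v h‖^2), fun w hw => ?_⟩
    have hDpos : 0 < ∑ h ∈ w.support, lam h ^ (-(2*r)) * ‖w h‖^2 := by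
      obtain ⟨i, hi⟩ := Finsupp.support_nonempty_iff.mpr hw
      refine Finset.sum_pos' (fun j _ => ?_) ⟨i, hi, ?_⟩
      · have := hpos j; positivity
      · have h1 : w i ≠ 0 := Finsupp.mem_support_iff.mp hi
        have h2 : 0 < ‖w i‖ := norm_pos_iff.mpr h1
        have := hpos i
        positivity
    have hD0 : 0 < Real.sqrt (∑ h ∈ w.support, lam h ^ (-(2*r)) * ‖w h‖^2) :=
      Real.sqrt_pos.mpr hDpos
    rw [div_le_iff₀ hD0]
    have key : ∀ h, lam h ^ (-(2*r)) * ‖w h‖^2 = (lam h ^ (-r) * ‖w h‖)^2 := by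
      intro h
      rw [mul_pow, ← rp_sq _ (hpos h), mul_neg]
    have keyv : ∀ h, lam h ^ (2*r) * ‖v h‖^2 = (lam h ^ r * ‖v h‖)^2 := by
      intro h
      rw [mul_pow, ← rp_sq _ (hpos h)]
    calc ‖∑ h ∈ w.support, (starRingEnd 𝕜) (w h) * v h‖
        ≤ ∑ h ∈ w.support, (lam h ^ (-r) * ‖w h‖) * (lam h ^ r * ‖v h‖) := by
          refine (norm_sum_le _ _).trans (Finset.sum_le_sum fun h _ => ?_)
          rw [norm_mul, RCLike.norm_conj]
          have e : lam h ^ (-r) * ‖w h‖ * (lam h ^ r * ‖v h‖)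
              = (lam h ^ (-r) * lam h ^ r) * (‖w h‖ * ‖v h‖) := by ring
          rw [e, ← Real.rpow_add (hpos h), neg_add_cancel, Real.rpow_zero, one_mul]
      _ ≤ Real.sqrt (∑ h ∈ w.support, (lam h ^ (-r) * ‖w h‖)^2) *
          Real.sqrt (∑ h ∈ w.support, (lam h ^ r * ‖v h‖)^2) := by
          rw [← Real.sqrt_mul (Finset.sum_nonneg fun h _ => sq_nonneg _)]
          exact Real.le_sqrt_of_sq_le (Finset.sum_mul_sq_le_sq_mul_sq w.support
            (fun h => lam h ^ (-r) * ‖w h‖) (fun h => lam h ^ r * ‖v h‖))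
      _ ≤ Real.sqrt (∑ h ∈ w.support, lam h ^ (-(2*r)) * ‖w h‖^2) *
          Real.sqrt (∑' h, lam h ^ (2*r) * ‖v h‖^2) := by
          rw [show (∑ h ∈ w.support, (lam h ^ (-r) * ‖w h‖)^2)
              = ∑ h ∈ w.support, lam h ^ (-(2*r)) * ‖w h‖^2 from
            Finset.sum_congr rfl fun h _ => (key h).symm]
          refine mul_le_mul_of_nonneg_left (Real.sqrt_le_sqrt ?_) (Real.sqrt_nonneg _)
          rw [show (∑ h ∈ w.support, (lam h ^ r * ‖v h‖)^2)
              = ∑ h ∈ w.support, lam h ^ (2*r) * ‖v h‖^2 from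
            Finset.sum_congr rfl fun h _ => (keyv h).symm]
          exact Summable.sum_le_tsum _ (fun h _ => by have := hpos h; positivity) hr
      _ = _ := mul_comm _ _
  · rintro ⟨C, hC⟩
    set C' := max C 0 with hC'
    refine summable_of_sum_le (c := C'^2)
      (fun h => by have := hpos h; positivity) fun F => ?_
    set w : ι →₀ 𝕜 := Finsupp.onFinset F
      (fun h => if h ∈ F then ((lam h ^ (2*r) : ℝ) : 𝕜) * v h else 0)
      (fun h hh => by by_contra hF; simp [hF] at hh) with hwdef
    have hwapp : ∀ h ∈ F, w h = ((lam h ^ (2*r) : ℝ) : 𝕜) * v h := by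
      intro h hh; simp [hwdef, hh]
    have hsupp : w.support ⊆ F := Finsupp.support_onFinset_subset
    by_cases hw : w = 0
    · have hz : ∀ h ∈ F, v h = 0 := by
        intro h hh
        have hwa := hwapp h hh
        rw [hw] at hwa
        simp only [Finsupp.coe_zero, Pi.zero_apply] at hwa
        have hne : ((lam h ^ (2*r) : ℝ) : 𝕜) ≠ 0 := by
          simp only [ne_eq, RCLike.ofReal_eq_zero]
          have := hpos h; positivity
        rcases mul_eq_zero.mp hwa.symm with h1 | h1
        · exact absurd h1 hne
        · exact h1
      calc ∑ h ∈ F, lam h ^ (2*r) * ‖v h‖^2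
          = 0 := Finset.sum_eq_zero fun h hh => by rw [hz h hh]; simp
        _ ≤ C'^2 := sq_nonneg _
    · have hb := hC w hw
      set S := ∑ h ∈ F, lam h ^ (2*r) * ‖v h‖^2 with hS
      have hnum : ∑ h ∈ w.support, (starRingEnd 𝕜) (w h) * v h = ((S : ℝ) : 𝕜) := by
        rw [Finset.sum_subset hsupp (fun h _ hh => by
          rw [Finsupp.notMem_support_iff.mp hh]; simp)]
        rw [hS, RCLike.ofReal_sum]
        refine Finset.sum_congr rfl fun h hh => ?_
        rw [hwapp h hh, map_mul, RCLike.conj_ofReal, mul_assoc, RCLike.conj_mul]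
        norm_cast
      have hterm : ∀ h, lam h ^ (-(2*r)) * (lam h ^ (2*r) * ‖v h‖)^2
          = lam h ^ (2*r) * ‖v h‖^2 := by
        intro h
        rw [mul_pow, ← Real.rpow_natCast (lam h ^ (2*r)) 2,
          ← Real.rpow_mul (hpos h).le, ← mul_assoc, ← Real.rpow_add (hpos h)]
        norm_num
        left
        congr 1
        ring
      have hden : ∑ h ∈ w.support, lam h ^ (-(2*r)) * ‖w h‖^2 = S := by
        rw [Finset.sum_subset hsupp (fun h _ hh => by
          rw [Finsupp.notMem_support_iff.mp hh]; simp)]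
        refine Finset.sum_congr rfl fun h hh => ?_
        rw [hwapp h hh, norm_mul, RCLike.norm_ofReal,
          abs_of_nonneg (by have := hpos h; positivity : (0:ℝ) ≤ lam h ^ (2*r)),
          hterm h]
      have hS0 : 0 ≤ S := Finset.sum_nonneg fun h _ => by have := hpos h; positivity
      rw [hnum, hden] at hb
      have hnorm : ‖((S:ℝ):𝕜)‖ = S := by rw [RCLike.norm_ofReal, abs_of_nonneg hS0]
      rw [hnorm, Real.div_sqrt] at hb
      have hb' : Real.sqrt S ≤ C' := le_trans hb (le_max_left _ _)
      calc S = Real.sqrt S ^ 2 := (Real.sq_sqrt hS0).symm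
        _ ≤ C'^2 := by
            have := Real.sqrt_nonneg S
            nlinarith
end

section
/- Let r ≥ 1/6, let Hᵣ ⊂ L²((0,1)) be the Sobolev-type interpolation space of order r associated to the Dirichlet Laplacian on (0,1) (so Hᵣ embeds into L⁶((0,1))), and let f ∈ Lip²((0,1)×ℝ, ℝ). Then the Nemytskii operator F : Hᵣ → L²((0,1)), F(v)(x) = f(x,v(x)), is twice Fréchet differentiable with (F'(v)h)(x) = (∂₂f)(x,v(x)) h(x) and (F''(v)(h,g))(x) = (∂₂²f)(x,v(x)) h(x) g(x), and F ∈ Lip²(Hᵣ, L²), i.e. F'' is globally Lipschitz with sup_v ‖F''(v)‖_{L^{(2)}(Hᵣ, L²)} ≤ |f|_{C²_b} (sup_{0≠w∈Hᵣ} ‖w‖_{L⁴}/‖w‖_{Hᵣ})². -/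
open MeasureTheory Filter Asymptotics
open scoped ENNReal NNReal Topology

/-!
Taylor's formula in the second variable gives the pointwise bounds
`|f(x, a + t) - f(x, a) - ∂₂f(x, a) t| ≤ C₂ t²` and
`|∂₂f(x, a + t) - ∂₂f(x, a) - ∂₂²f(x, a) t| ≤ L t²`, where `C₂` bounds `∂₂²f` and `L` is its
Lipschitz constant. At `a = v(x)`, `t = u(x)`, Hölder's inequality (`L⁴ · L⁴ ⊆ L²` and
`L⁶ · L⁶ · L⁶ ⊆ L²`) together with the embeddings `H_r ↪ L⁴, L⁶` turns them into `O(‖u‖²)`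
remainder bounds for `F` and `F'`, hence Fréchet differentiability. `F'(v)` and `F''(v)` are
multiplication by the bounded functions `∂₂f(·, v)` and `∂₂²f(·, v)`, and the same Hölder bound
applied to `|∂₂²f(x, v) - ∂₂²f(x, w)| ≤ L |v - w|` makes `F''` Lipschitz.
-/

theorem ENNReal.holderTriple_coe {p q r : ℝ≥0} (hp : p ≠ 0) (hq : q ≠ 0) (hr : r ≠ 0)
    (h : p⁻¹ + q⁻¹ = r⁻¹) : ENNReal.HolderTriple p q r :=
  ⟨by rw [← ENNReal.coe_inv hp, ← ENNReal.coe_inv hq, ← ENNReal.coe_inv hr, ← ENNReal.coe_add, h]⟩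

instance : Fact ((1 : ℝ≥0∞) ≤ 3) := ⟨by norm_num⟩
instance : Fact ((1 : ℝ≥0∞) ≤ 4) := ⟨by norm_num⟩
instance : Fact ((1 : ℝ≥0∞) ≤ 6) := ⟨by norm_num⟩

instance : ENNReal.HolderTriple 4 4 2 :=
  ENNReal.holderTriple_coe (p := 4) (q := 4) (r := 2) (by norm_num) (by norm_num) (by norm_num)
    (by rw [← NNReal.coe_inj]; push_cast; norm_num)

instance : ENNReal.HolderTriple 6 6 3 :=
  ENNReal.holderTriple_coe (p := 6) (q := 6) (r := 3) (by norm_num) (by norm_num) (by norm_num)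
    (by rw [← NNReal.coe_inj]; push_cast; norm_num)

instance : ENNReal.HolderTriple 3 6 2 :=
  ENNReal.holderTriple_coe (p := 3) (q := 6) (r := 2) (by norm_num) (by norm_num) (by norm_num)
    (by rw [← NNReal.coe_inj]; push_cast; norm_num)

theorem abs_sub_sub_mul_le_of_abs_deriv_sub_le {g g' : ℝ → ℝ} {L : ℝ}
    (hg : ∀ a, HasDerivAt g (g' a) a) (hL : ∀ a b, |g' a - g' b| ≤ L * |a - b|) (a t : ℝ) :
    |g (a + t) - g a - g' a * t| ≤ L * t ^ 2 := by
  have hL₀ : 0 ≤ L := by simpa using (abs_nonneg _).trans (hL 1 0)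
  have key := Convex.norm_image_sub_le_of_norm_hasDerivWithin_le
    (f := fun s => g s - g' a * s) (f' := fun s => g' s - g' a) (C := L * |t|)
    (fun s _ => ((hg s).sub ((hasDerivAt_id s).const_mul (g' a))).hasDerivWithinAt.congr_deriv
      (by simp)) (fun s hs => ?_) (convex_uIcc a (a + t)) Set.left_mem_uIcc Set.right_mem_uIcc
  · calc |g (a + t) - g a - g' a * t| = ‖(g (a + t) - g' a * (a + t)) - (g a - g' a * a)‖ := by
          rw [Real.norm_eq_abs]; ring_nf
      _ ≤ L * |t| * ‖a + t - a‖ := key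
      _ = L * t ^ 2 := by rw [add_sub_cancel_left, Real.norm_eq_abs, mul_assoc, ← sq, sq_abs]
  · calc ‖g' s - g' a‖ ≤ L * |s - a| := hL s a
      _ ≤ L * |t| := mul_le_mul_of_nonneg_left
          (by simpa using Set.abs_sub_left_of_mem_uIcc hs) hL₀

theorem hasFDerivAt_of_norm_sub_le_sq {E G : Type*} [NormedAddCommGroup E] [NormedSpace ℝ E]
    [NormedAddCommGroup G] [NormedSpace ℝ G] {F : E → G} {D : E →L[ℝ] G} {x : E} {C : ℝ}
    (h : ∀ u, ‖F (x + u) - F x - D u‖ ≤ C * ‖u‖ ^ 2) : HasFDerivAt F D x := by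
  rw [hasFDerivAt_iff_isLittleO_nhds_zero]
  refine (IsBigO.of_bound C (Eventually.of_forall fun u => ?_)).trans_isLittleO
    (isLittleO_norm_pow_id one_lt_two)
  simpa using h u

section

variable {α : Type*} [MeasurableSpace α] {μ : Measure α}

theorem aestronglyMeasurable_deriv_comp {g : α → ℝ → ℝ}
    (hg : ∀ ⦃u : α → ℝ⦄, AEStronglyMeasurable u μ → AEStronglyMeasurable (fun x => g x (u x)) μ)
    (hdiff : ∀ᵐ x ∂μ, Differentiable ℝ (g x)) {w : α → ℝ} (hw : AEStronglyMeasurable w μ) :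
    AEStronglyMeasurable (fun x => deriv (g x) (w x)) μ := by
  have hseq : Tendsto (fun n : ℕ => (n : ℝ)⁻¹) atTop (𝓝[>] 0) :=
    tendsto_inv_atTop_nhdsGT_zero.comp tendsto_natCast_atTop_atTop
  refine aestronglyMeasurable_of_tendsto_ae atTop
    (f := fun (n : ℕ) x => ((n : ℝ)⁻¹)⁻¹ • (g x (w x + (n : ℝ)⁻¹) - g x (w x)))
    (fun n => ((hg (hw.add_const _)).sub (hg hw)).const_mul _) ?_
  filter_upwards [hdiff] with x hx
  exact (hx (w x)).hasDerivAt.tendsto_slope_zero_right.comp hseq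

namespace MeasureTheory.Lp

variable {p q r s t : ℝ≥0∞} [Fact (1 ≤ p)] [Fact (1 ≤ q)] [Fact (1 ≤ r)]

variable (μ p q r) in
noncomputable def mulL [p.HolderTriple q r] : Lp ℝ p μ →L[ℝ] Lp ℝ q μ →L[ℝ] Lp ℝ r μ :=
  (ContinuousLinearMap.mul ℝ ℝ).holderL μ p q r

theorem coeFn_mulL [p.HolderTriple q r] (f : Lp ℝ p μ) (g : Lp ℝ q μ) :
    mulL μ p q r f g =ᵐ[μ] ⇑f * ⇑g :=
  (ContinuousLinearMap.mul ℝ ℝ).coeFn_holder f g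

theorem norm_mulL_apply_apply_le [p.HolderTriple q r] (f : Lp ℝ p μ) (g : Lp ℝ q μ) :
    ‖mulL μ p q r f g‖ ≤ ‖f‖ * ‖g‖ :=
  ((ContinuousLinearMap.mul ℝ ℝ).norm_holder_apply_apply_le f g).trans <| by
    rw [mul_assoc]
    exact mul_le_of_le_one_left (by positivity) (ContinuousLinearMap.opNorm_mul_le ℝ ℝ)

theorem norm_le_of_ae_abs_le_mul_abs_mul [p.HolderTriple q r] {K : ℝ} (hK : 0 ≤ K)
    {R : Lp ℝ r μ} {f : Lp ℝ p μ} {g : Lp ℝ q μ} (h : ∀ᵐ x ∂μ, |R x| ≤ K * |f x * g x|) :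
    ‖R‖ ≤ K * (‖f‖ * ‖g‖) := by
  refine (norm_le_mul_norm_of_ae_le_mul (g := mulL μ p q r f g) ?_).trans
    (mul_le_mul_of_nonneg_left (norm_mulL_apply_apply_le f g) hK)
  filter_upwards [h, coeFn_mulL (r := r) f g] with x hx hfg
  simpa [hfg] using hx

theorem norm_le_of_ae_abs_le_mul_abs_mul_mul [Fact (1 ≤ s)] [Fact (1 ≤ t)] [p.HolderTriple q s]
    [s.HolderTriple t r] {K : ℝ} (hK : 0 ≤ K) {R : Lp ℝ r μ} {f : Lp ℝ p μ} {g : Lp ℝ q μ}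
    {k : Lp ℝ t μ} (h : ∀ᵐ x ∂μ, |R x| ≤ K * |f x * g x * k x|) :
    ‖R‖ ≤ K * (‖f‖ * ‖g‖ * ‖k‖) := by
  refine (norm_le_of_ae_abs_le_mul_abs_mul hK (f := mulL μ p q s f g) (g := k) ?_).trans
    (mul_le_mul_of_nonneg_left (mul_le_mul_of_nonneg_right (norm_mulL_apply_apply_le f g)
      (norm_nonneg k)) hK)
  filter_upwards [h, coeFn_mulL (r := s) f g] with x hx hfg
  simpa [hfg] using hx

end MeasureTheory.Lp

variable {V : Type*} [NormedAddCommGroup V] [NormedSpace ℝ V]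

def LinearMap.IsLpBoundedWith (J : V →ₗ[ℝ] α → ℝ) (p : ℝ≥0∞) (μ : Measure α) (C : ℝ) : Prop :=
  ∀ v, MemLp (J v) p μ ∧ eLpNorm (J v) p μ ≤ ENNReal.ofReal (C * ‖v‖)

namespace LinearMap.IsLpBoundedWith

variable {J : V →ₗ[ℝ] α → ℝ} {p : ℝ≥0∞} {C : ℝ}

theorem aestronglyMeasurable (hJ : J.IsLpBoundedWith p μ C) (v : V) :
    AEStronglyMeasurable (J v) μ :=
  (hJ v).1.1

variable [Fact (1 ≤ p)]

-- `C < 0` is allowed (it forces `J v = 0` a.e.), hence the operator bound `max C 0`.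
noncomputable def toLpL (hJ : J.IsLpBoundedWith p μ C) : V →L[ℝ] Lp ℝ p μ :=
  LinearMap.mkContinuous
    { toFun := fun v => (hJ v).1.toLp
      map_add' := fun v w => by
        rw [← MemLp.toLp_add]
        exact MemLp.toLp_congr _ _ (EventuallyEq.of_eq (map_add J v w))
      map_smul' := fun c v => by
        rw [RingHom.id_apply, ← MemLp.toLp_const_smul]
        exact MemLp.toLp_congr _ _ (EventuallyEq.of_eq (J.map_smul c v)) }
    (max C 0) fun v => by
      rw [LinearMap.coe_mk, AddHom.coe_mk, Lp.norm_toLp]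
      exact ENNReal.toReal_le_of_le_ofReal (by positivity) ((hJ v).2.trans
        (ENNReal.ofReal_le_ofReal (by gcongr; exact le_max_left C 0)))

theorem coeFn_toLpL (hJ : J.IsLpBoundedWith p μ C) (v : V) : hJ.toLpL v =ᵐ[μ] J v :=
  MemLp.coeFn_toLp (hJ v).1

theorem norm_toLpL_apply_le (hJ : J.IsLpBoundedWith p μ C) (v : V) :
    ‖hJ.toLpL v‖ ≤ max C 0 * ‖v‖ :=
  hJ.toLpL.le_of_opNorm_le (LinearMap.mkContinuous_norm_le _ (le_max_right C 0) _) v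

variable {M : ℝ} {R : Lp ℝ 2 μ}

theorem norm_le_of_ae_abs_le_mul_abs_mul (hJ : J.IsLpBoundedWith 4 μ C) (hM : 0 ≤ M) {a b : V}
    (h : ∀ᵐ x ∂μ, |R x| ≤ M * |J a x * J b x|) : ‖R‖ ≤ M * C ^ 2 * (‖a‖ * ‖b‖) := by
  have hR : ‖R‖ ≤ M * (‖hJ.toLpL a‖ * ‖hJ.toLpL b‖) := by
    refine Lp.norm_le_of_ae_abs_le_mul_abs_mul hM ?_
    filter_upwards [h, hJ.coeFn_toLpL a, hJ.coeFn_toLpL b] with x hx ha hb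
    rwa [ha, hb]
  calc ‖R‖ ≤ M * (max C 0 * ‖a‖ * (max C 0 * ‖b‖)) := hR.trans <| by
        gcongr <;> exact hJ.norm_toLpL_apply_le _
    _ = M * max C 0 ^ 2 * (‖a‖ * ‖b‖) := by ring
    _ ≤ M * C ^ 2 * (‖a‖ * ‖b‖) := by
        have hC : max C 0 ^ 2 ≤ C ^ 2 := (pow_le_pow_left₀ (le_max_right C 0)
          (max_le (le_abs_self C) (abs_nonneg C)) 2).trans_eq (sq_abs C)
        gcongr

theorem norm_le_of_ae_abs_le_mul_abs_mul_mul (hJ : J.IsLpBoundedWith 6 μ C) (hM : 0 ≤ M)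
    {a b c : V} (h : ∀ᵐ x ∂μ, |R x| ≤ M * |J a x * J b x * J c x|) :
    ‖R‖ ≤ M * max C 0 ^ 3 * (‖a‖ * ‖b‖ * ‖c‖) := by
  have hR : ‖R‖ ≤ M * (‖hJ.toLpL a‖ * ‖hJ.toLpL b‖ * ‖hJ.toLpL c‖) := by
    refine Lp.norm_le_of_ae_abs_le_mul_abs_mul_mul (s := 3) hM ?_
    filter_upwards [h, hJ.coeFn_toLpL a, hJ.coeFn_toLpL b, hJ.coeFn_toLpL c] with x hx ha hb hc
    rwa [ha, hb, hc]
  calc ‖R‖ ≤ M * (max C 0 * ‖a‖ * (max C 0 * ‖b‖) * (max C 0 * ‖c‖)) := hR.trans <| by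
        gcongr <;> exact hJ.norm_toLpL_apply_le _
    _ = M * max C 0 ^ 3 * (‖a‖ * ‖b‖ * ‖c‖) := by ring

end LinearMap.IsLpBoundedWith

structure Lip2Integrand (μ : Measure α) (f : α → ℝ → ℝ) (C₁ C₂ L : ℝ) : Prop where
  aestronglyMeasurable_comp : ∀ ⦃u : α → ℝ⦄, AEStronglyMeasurable u μ →
    AEStronglyMeasurable (fun x => f x (u x)) μ
  contDiff : ∀ᵐ x ∂μ, ContDiff ℝ 2 (f x)
  abs_deriv_le : ∀ᵐ x ∂μ, ∀ a, |deriv (f x) a| ≤ C₁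
  abs_deriv_deriv_le : ∀ᵐ x ∂μ, ∀ a, |deriv (deriv (f x)) a| ≤ C₂
  abs_deriv_deriv_sub_le : ∀ᵐ x ∂μ, ∀ a b,
    |deriv (deriv (f x)) a - deriv (deriv (f x)) b| ≤ L * |a - b|

namespace Lip2Integrand

variable {f : α → ℝ → ℝ} {C₁ C₂ L : ℝ}

theorem deriv_deriv_bound_nonneg [NeZero μ] (hf : Lip2Integrand μ f C₁ C₂ L) : 0 ≤ C₂ := by
  obtain ⟨x, hx⟩ := hf.abs_deriv_deriv_le.exists
  exact (abs_nonneg _).trans (hx 0)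

theorem lipschitz_bound_nonneg [NeZero μ] (hf : Lip2Integrand μ f C₁ C₂ L) : 0 ≤ L := by
  obtain ⟨x, hx⟩ := hf.abs_deriv_deriv_sub_le.exists
  simpa using (abs_nonneg _).trans (hx 1 0)

theorem aestronglyMeasurable_deriv_comp (hf : Lip2Integrand μ f C₁ C₂ L) {w : α → ℝ}
    (hw : AEStronglyMeasurable w μ) : AEStronglyMeasurable (fun x => deriv (f x) (w x)) μ :=
  _root_.aestronglyMeasurable_deriv_comp hf.aestronglyMeasurable_comp
    (hf.contDiff.mono fun _ hx => hx.differentiable two_ne_zero) hw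

theorem aestronglyMeasurable_deriv_deriv_comp (hf : Lip2Integrand μ f C₁ C₂ L) {w : α → ℝ}
    (hw : AEStronglyMeasurable w μ) :
    AEStronglyMeasurable (fun x => deriv (deriv (f x)) (w x)) μ :=
  _root_.aestronglyMeasurable_deriv_comp (fun _ => hf.aestronglyMeasurable_deriv_comp)
    (hf.contDiff.mono fun _ hx => hx.differentiable_deriv_two) hw

theorem memLp_top_deriv_comp (hf : Lip2Integrand μ f C₁ C₂ L) {w : α → ℝ}
    (hw : AEStronglyMeasurable w μ) : MemLp (fun x => deriv (f x) (w x)) ∞ μ :=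
  memLp_top_of_bound (hf.aestronglyMeasurable_deriv_comp hw) C₁
    (hf.abs_deriv_le.mono fun x hx => hx (w x))

theorem memLp_top_deriv_deriv_comp (hf : Lip2Integrand μ f C₁ C₂ L) {w : α → ℝ}
    (hw : AEStronglyMeasurable w μ) : MemLp (fun x => deriv (deriv (f x)) (w x)) ∞ μ :=
  memLp_top_of_bound (hf.aestronglyMeasurable_deriv_deriv_comp hw) C₂
    (hf.abs_deriv_deriv_le.mono fun x hx => hx (w x))

theorem abs_sub_sub_deriv_mul_le (hf : Lip2Integrand μ f C₁ C₂ L) :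
    ∀ᵐ x ∂μ, ∀ a t, |f x (a + t) - f x a - deriv (f x) a * t| ≤ C₂ * t ^ 2 := by
  filter_upwards [hf.contDiff, hf.abs_deriv_deriv_le] with x hx hx₂
  refine abs_sub_sub_mul_le_of_abs_deriv_sub_le
    (fun a => (hx.differentiable two_ne_zero a).hasDerivAt) fun a b => ?_
  simpa using Convex.norm_image_sub_le_of_norm_deriv_le
    (fun c _ => hx.differentiable_deriv_two c) (fun c _ => hx₂ c) convex_univ
    (Set.mem_univ b) (Set.mem_univ a)

theorem abs_deriv_sub_sub_deriv_deriv_mul_le (hf : Lip2Integrand μ f C₁ C₂ L) :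
    ∀ᵐ x ∂μ, ∀ a t,
      |deriv (f x) (a + t) - deriv (f x) a - deriv (deriv (f x)) a * t| ≤ L * t ^ 2 := by
  filter_upwards [hf.contDiff, hf.abs_deriv_deriv_sub_le] with x hx hxL
  exact abs_sub_sub_mul_le_of_abs_deriv_sub_le
    (fun a => (hx.differentiable_deriv_two a).hasDerivAt) hxL

end Lip2Integrand

section Nemytskii

variable {f : α → ℝ → ℝ} {C₁ C₂ L : ℝ} {J : V →ₗ[ℝ] α → ℝ} {K₂ K₄ K₆ : ℝ}

noncomputable def nemytskiiFDeriv (hf : Lip2Integrand μ f C₁ C₂ L)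
    (hJ₂ : J.IsLpBoundedWith 2 μ K₂) (v : V) : V →L[ℝ] Lp ℝ 2 μ :=
  Lp.mulL μ ∞ 2 2 ((hf.memLp_top_deriv_comp (hJ₂.aestronglyMeasurable v)).toLp _) ∘L hJ₂.toLpL

noncomputable def nemytskiiFDeriv2 (hf : Lip2Integrand μ f C₁ C₂ L)
    (hJ₄ : J.IsLpBoundedWith 4 μ K₄) (v : V) : V →L[ℝ] V →L[ℝ] Lp ℝ 2 μ :=
  ContinuousLinearMap.compL ℝ V _ _
      (Lp.mulL μ ∞ 2 2 ((hf.memLp_top_deriv_deriv_comp (hJ₄.aestronglyMeasurable v)).toLp _)) ∘L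
    (Lp.mulL μ 4 4 2).bilinearComp hJ₄.toLpL hJ₄.toLpL

theorem coeFn_nemytskiiFDeriv_apply (hf : Lip2Integrand μ f C₁ C₂ L)
    (hJ₂ : J.IsLpBoundedWith 2 μ K₂) (v h : V) :
    nemytskiiFDeriv hf hJ₂ v h =ᵐ[μ] fun x => deriv (f x) (J v x) * J h x := by
  rw [nemytskiiFDeriv, ContinuousLinearMap.comp_apply]
  refine (Lp.coeFn_mulL _ _).trans ?_
  filter_upwards [MemLp.coeFn_toLp (hf.memLp_top_deriv_comp (hJ₂.aestronglyMeasurable v)),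
    hJ₂.coeFn_toLpL h] with x h₁ h₂
  rw [Pi.mul_apply, h₁, h₂]

theorem coeFn_nemytskiiFDeriv2_apply (hf : Lip2Integrand μ f C₁ C₂ L)
    (hJ₄ : J.IsLpBoundedWith 4 μ K₄) (v h g : V) :
    nemytskiiFDeriv2 hf hJ₄ v h g =ᵐ[μ]
      fun x => deriv (deriv (f x)) (J v x) * J h x * J g x := by
  rw [nemytskiiFDeriv2, ContinuousLinearMap.comp_apply, ContinuousLinearMap.compL_apply,
    ContinuousLinearMap.comp_apply, ContinuousLinearMap.bilinearComp_apply]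
  refine (Lp.coeFn_mulL _ _).trans ?_
  filter_upwards [Lp.coeFn_mulL (r := 2) (hJ₄.toLpL h) (hJ₄.toLpL g), MemLp.coeFn_toLp
    (hf.memLp_top_deriv_deriv_comp (hJ₄.aestronglyMeasurable v)), hJ₄.coeFn_toLpL h,
    hJ₄.coeFn_toLpL g] with x h₁ h₂ h₃ h₄
  simp only [Pi.mul_apply, h₁, h₂, h₃, h₄, mul_assoc]

variable [NeZero μ]

theorem hasFDerivAt_nemytskii (hf : Lip2Integrand μ f C₁ C₂ L)
    (hJ₂ : J.IsLpBoundedWith 2 μ K₂) (hJ₄ : J.IsLpBoundedWith 4 μ K₄) {F : V → Lp ℝ 2 μ}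
    (hF : ∀ v, F v =ᵐ[μ] fun x => f x (J v x)) (v : V) :
    HasFDerivAt F (nemytskiiFDeriv hf hJ₂ v) v := by
  refine hasFDerivAt_of_norm_sub_le_sq (C := C₂ * K₄ ^ 2) fun u => ?_
  calc ‖F (v + u) - F v - nemytskiiFDeriv hf hJ₂ v u‖
      ≤ C₂ * K₄ ^ 2 * (‖u‖ * ‖u‖) :=
        hJ₄.norm_le_of_ae_abs_le_mul_abs_mul hf.deriv_deriv_bound_nonneg ?_
    _ = C₂ * K₄ ^ 2 * ‖u‖ ^ 2 := by ring
  filter_upwards [Lp.coeFn_sub (F (v + u) - F v) (nemytskiiFDeriv hf hJ₂ v u),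
    Lp.coeFn_sub (F (v + u)) (F v), hF (v + u), hF v, coeFn_nemytskiiFDeriv_apply hf hJ₂ v u,
    hf.abs_sub_sub_deriv_mul_le] with x h₁ h₂ h₃ h₄ h₅ hx
  rw [h₁, Pi.sub_apply, h₂, Pi.sub_apply, h₃, h₄, h₅, map_add, Pi.add_apply, abs_mul_self, ← sq]
  exact hx _ _

theorem hasFDerivAt_nemytskiiFDeriv (hf : Lip2Integrand μ f C₁ C₂ L)
    (hJ₂ : J.IsLpBoundedWith 2 μ K₂) (hJ₄ : J.IsLpBoundedWith 4 μ K₄)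
    (hJ₆ : J.IsLpBoundedWith 6 μ K₆) (v : V) :
    HasFDerivAt (nemytskiiFDeriv hf hJ₂) (nemytskiiFDeriv2 hf hJ₄ v) v := by
  have hL := hf.lipschitz_bound_nonneg
  refine hasFDerivAt_of_norm_sub_le_sq (C := L * max K₆ 0 ^ 3) fun u => ?_
  refine ContinuousLinearMap.opNorm_le_bound _ (by positivity) fun g => ?_
  calc ‖(nemytskiiFDeriv hf hJ₂ (v + u) - nemytskiiFDeriv hf hJ₂ v - nemytskiiFDeriv2 hf hJ₄ v u) g‖
      ≤ L * max K₆ 0 ^ 3 * (‖u‖ * ‖u‖ * ‖g‖) :=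
        hJ₆.norm_le_of_ae_abs_le_mul_abs_mul_mul hL ?_
    _ = L * max K₆ 0 ^ 3 * ‖u‖ ^ 2 * ‖g‖ := by ring
  simp only [sub_apply]
  filter_upwards [Lp.coeFn_sub (nemytskiiFDeriv hf hJ₂ (v + u) g - nemytskiiFDeriv hf hJ₂ v g)
      (nemytskiiFDeriv2 hf hJ₄ v u g),
    Lp.coeFn_sub (nemytskiiFDeriv hf hJ₂ (v + u) g) (nemytskiiFDeriv hf hJ₂ v g),
    coeFn_nemytskiiFDeriv_apply hf hJ₂ (v + u) g, coeFn_nemytskiiFDeriv_apply hf hJ₂ v g,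
    coeFn_nemytskiiFDeriv2_apply hf hJ₄ v u g, hf.abs_deriv_sub_sub_deriv_deriv_mul_le]
    with x h₁ h₂ h₃ h₄ h₅ hx
  rw [h₁, Pi.sub_apply, h₂, Pi.sub_apply, h₃, h₄, h₅, map_add, Pi.add_apply]
  calc _ = |deriv (f x) (J v x + J u x) - deriv (f x) (J v x)
          - deriv (deriv (f x)) (J v x) * J u x| * |J g x| := by rw [← abs_mul]; ring_nf
    _ ≤ L * J u x ^ 2 * |J g x| := by gcongr; exact hx _ _
    _ = L * |J u x * J u x * J g x| := by rw [abs_mul, abs_mul_self, sq, mul_assoc]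

theorem norm_nemytskiiFDeriv2_le (hf : Lip2Integrand μ f C₁ C₂ L)
    (hJ₄ : J.IsLpBoundedWith 4 μ K₄) (v : V) :
    ‖nemytskiiFDeriv2 hf hJ₄ v‖ ≤ C₂ * K₄ ^ 2 := by
  have hC₂ := hf.deriv_deriv_bound_nonneg
  refine ContinuousLinearMap.opNorm_le_bound₂ _ (by positivity) fun h g => ?_
  calc ‖nemytskiiFDeriv2 hf hJ₄ v h g‖ ≤ C₂ * K₄ ^ 2 * (‖h‖ * ‖g‖) :=
        hJ₄.norm_le_of_ae_abs_le_mul_abs_mul hC₂ ?_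
    _ = C₂ * K₄ ^ 2 * ‖h‖ * ‖g‖ := by ring
  filter_upwards [coeFn_nemytskiiFDeriv2_apply hf hJ₄ v h g, hf.abs_deriv_deriv_le]
    with x h₁ hx
  rw [h₁, mul_assoc, abs_mul]
  gcongr
  exact hx _

theorem norm_nemytskiiFDeriv2_sub_le (hf : Lip2Integrand μ f C₁ C₂ L)
    (hJ₄ : J.IsLpBoundedWith 4 μ K₄) (hJ₆ : J.IsLpBoundedWith 6 μ K₆) (v w : V) :
    ‖nemytskiiFDeriv2 hf hJ₄ v - nemytskiiFDeriv2 hf hJ₄ w‖ ≤ L * max K₆ 0 ^ 3 * ‖v - w‖ := by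
  have hL := hf.lipschitz_bound_nonneg
  refine ContinuousLinearMap.opNorm_le_bound _ (by positivity) fun h =>
    ContinuousLinearMap.opNorm_le_bound _ (by positivity) fun g => ?_
  calc ‖(nemytskiiFDeriv2 hf hJ₄ v - nemytskiiFDeriv2 hf hJ₄ w) h g‖
      ≤ L * max K₆ 0 ^ 3 * (‖v - w‖ * ‖h‖ * ‖g‖) :=
        hJ₆.norm_le_of_ae_abs_le_mul_abs_mul_mul hL ?_
    _ = L * max K₆ 0 ^ 3 * ‖v - w‖ * ‖h‖ * ‖g‖ := by ring
  simp only [sub_apply]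
  filter_upwards [Lp.coeFn_sub (nemytskiiFDeriv2 hf hJ₄ v h g) (nemytskiiFDeriv2 hf hJ₄ w h g),
    coeFn_nemytskiiFDeriv2_apply hf hJ₄ v h g, coeFn_nemytskiiFDeriv2_apply hf hJ₄ w h g,
    hf.abs_deriv_deriv_sub_le] with x h₁ h₂ h₃ hx
  rw [h₁, Pi.sub_apply, h₂, h₃, map_sub, Pi.sub_apply, ← sub_mul, ← sub_mul]
  simp only [abs_mul]
  calc _ ≤ L * |J v x - J w x| * |J h x| * |J g x| := by gcongr; exact hx _ _
    _ = _ := by ring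

end Nemytskii

end

theorem stmt17_nemytskii_C2_general
    (V : Type*) [NormedAddCommGroup V] [NormedSpace ℝ V]
    (J : V →ₗ[ℝ] (ℝ → ℝ))
    -- Sobolev embeddings `H_r ↪ L²`, `H_r ↪ L⁴`, `H_r ↪ L⁶` on `(0,1)`:
    (C2 C4 C6 : ℝ)
    (hJ2 : ∀ v : V, MemLp (J v) 2 (volume.restrict (Set.Ioo (0 : ℝ) 1)) ∧
      eLpNorm (J v) 2 (volume.restrict (Set.Ioo (0 : ℝ) 1)) ≤ ENNReal.ofReal (C2 * ‖v‖))
    (hJ4 : ∀ v : V, MemLp (J v) 4 (volume.restrict (Set.Ioo (0 : ℝ) 1)) ∧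
      eLpNorm (J v) 4 (volume.restrict (Set.Ioo (0 : ℝ) 1)) ≤ ENNReal.ofReal (C4 * ‖v‖))
    (hJ6 : ∀ v : V, MemLp (J v) 6 (volume.restrict (Set.Ioo (0 : ℝ) 1)) ∧
      eLpNorm (J v) 6 (volume.restrict (Set.Ioo (0 : ℝ) 1)) ≤ ENNReal.ofReal (C6 * ‖v‖))
    -- `f ∈ Lip²((0,1) × ℝ, ℝ)`:
    (f : ℝ → ℝ → ℝ) (hfc : Continuous fun q : ℝ × ℝ => f q.1 q.2)
    (hfC2 : ∀ x ∈ Set.Ioo (0 : ℝ) 1, ContDiff ℝ 2 (f x))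
    (Cf1 Cf2 L2 : ℝ)
    (hf1 : ∀ x ∈ Set.Ioo (0 : ℝ) 1, ∀ a : ℝ, |deriv (f x) a| ≤ Cf1)
    (hf2 : ∀ x ∈ Set.Ioo (0 : ℝ) 1, ∀ a : ℝ, |deriv (deriv (f x)) a| ≤ Cf2)
    (hf2lip : ∀ x ∈ Set.Ioo (0 : ℝ) 1, ∀ a b : ℝ,
      |deriv (deriv (f x)) a - deriv (deriv (f x)) b| ≤ L2 * |a - b|)
    -- the Nemytskii operator `F : V → L²((0,1))`:
    (F : V → Lp ℝ 2 (volume.restrict (Set.Ioo (0 : ℝ) 1)))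
    (hF : ∀ v : V,
      (F v : ℝ → ℝ) =ᵐ[volume.restrict (Set.Ioo (0 : ℝ) 1)] fun x => f x (J v x)) :
    ∃ D : V → (V →L[ℝ] Lp ℝ 2 (volume.restrict (Set.Ioo (0 : ℝ) 1))),
    ∃ D2 : V → (V →L[ℝ] V →L[ℝ] Lp ℝ 2 (volume.restrict (Set.Ioo (0 : ℝ) 1))),
      -- `F` is Fréchet differentiable with the asserted derivative:
      (∀ v : V, HasFDerivAt F (D v) v) ∧
      (∀ v h : V, (D v h : ℝ → ℝ) =ᵐ[volume.restrict (Set.Ioo (0 : ℝ) 1)]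
        fun x => deriv (f x) (J v x) * J h x) ∧
      -- `F` is twice Fréchet differentiable with the asserted second derivative:
      (∀ v : V, HasFDerivAt D (D2 v) v) ∧
      (∀ v h g : V, (D2 v h g : ℝ → ℝ) =ᵐ[volume.restrict (Set.Ioo (0 : ℝ) 1)]
        fun x => deriv (deriv (f x)) (J v x) * J h x * J g x) ∧
      -- uniform bound on `F''`:
      (∀ v : V, ‖D2 v‖ ≤ Cf2 * C4 ^ 2) ∧
      -- `F''` is globally Lipschitz, i.e. `F ∈ Lip²(H_r, L²)`:
      (∃ K : ℝ, ∀ v w : V, ‖D2 v - D2 w‖ ≤ K * ‖v - w‖) := by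
  have : NeZero (volume.restrict (Set.Ioo (0 : ℝ) 1)) := ⟨by simp [Measure.restrict_eq_zero]⟩
  have hf : Lip2Integrand (volume.restrict (Set.Ioo (0 : ℝ) 1)) f Cf1 Cf2 L2 :=
    { aestronglyMeasurable_comp := fun _ hu =>
        hfc.comp_aestronglyMeasurable (aestronglyMeasurable_id.prodMk hu)
      contDiff := ae_restrict_of_forall_mem measurableSet_Ioo hfC2
      abs_deriv_le := ae_restrict_of_forall_mem measurableSet_Ioo hf1
      abs_deriv_deriv_le := ae_restrict_of_forall_mem measurableSet_Ioo hf2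
      abs_deriv_deriv_sub_le := ae_restrict_of_forall_mem measurableSet_Ioo hf2lip }
  exact ⟨nemytskiiFDeriv hf hJ2, nemytskiiFDeriv2 hf hJ4, hasFDerivAt_nemytskii hf hJ2 hJ4 hF,
    coeFn_nemytskiiFDeriv_apply hf hJ2, hasFDerivAt_nemytskiiFDeriv hf hJ2 hJ4 hJ6,
    coeFn_nemytskiiFDeriv2_apply hf hJ4, norm_nemytskiiFDeriv2_le hf hJ4,
    _, norm_nemytskiiFDeriv2_sub_le hf hJ4 hJ6⟩

/-- Let `r ≥ 1/6` and let `V = H_r ⊂ L²((0,1))` be the Sobolev-type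
interpolation space of order `r` for the Dirichlet Laplacian on `(0,1)` — modelled here as a
normed space `V` together with a linear realization `J : V → (ℝ → ℝ)` of its elements as
functions, embedding continuously into `L²`, `L⁴` and `L⁶` (Sobolev embedding, valid since
`r ≥ 1/6`).  Let `f ∈ Lip²((0,1) × ℝ, ℝ)`.  Then the Nemytskii operator
`F : V → L²((0,1))`, `F(v)(x) = f(x, v(x))`, is twice Fréchet differentiable with
`(F'(v)h)(x) = (∂₂f)(x, v(x)) h(x)` and `(F''(v)(h,g))(x) = (∂₂²f)(x, v(x)) h(x) g(x)`,
`F ∈ Lip²(H_r, L²)` (i.e. `F''` is globally Lipschitz), and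
`sup_v ‖F''(v)‖ ≤ |f|_{C²_b} (sup_{0≠w∈H_r} ‖w‖_{L⁴}/‖w‖_{H_r})²`. -/
theorem stmt17_nemytskii_C2
    (r : ℝ) (hr : 1 / 6 ≤ r)
    (V : Type*) [NormedAddCommGroup V] [NormedSpace ℝ V]
    (J : V →ₗ[ℝ] (ℝ → ℝ))
    -- Sobolev embeddings `H_r ↪ L²`, `H_r ↪ L⁴`, `H_r ↪ L⁶` on `(0,1)`:
    (C2 C4 C6 : ℝ)
    (hJ2 : ∀ v : V, MemLp (J v) 2 (volume.restrict (Set.Ioo (0 : ℝ) 1)) ∧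
      eLpNorm (J v) 2 (volume.restrict (Set.Ioo (0 : ℝ) 1)) ≤ ENNReal.ofReal (C2 * ‖v‖))
    (hJ4 : ∀ v : V, MemLp (J v) 4 (volume.restrict (Set.Ioo (0 : ℝ) 1)) ∧
      eLpNorm (J v) 4 (volume.restrict (Set.Ioo (0 : ℝ) 1)) ≤ ENNReal.ofReal (C4 * ‖v‖))
    (hJ6 : ∀ v : V, MemLp (J v) 6 (volume.restrict (Set.Ioo (0 : ℝ) 1)) ∧
      eLpNorm (J v) 6 (volume.restrict (Set.Ioo (0 : ℝ) 1)) ≤ ENNReal.ofReal (C6 * ‖v‖))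
    -- `f ∈ Lip²((0,1) × ℝ, ℝ)`:
    (f : ℝ → ℝ → ℝ) (hfc : Continuous fun q : ℝ × ℝ => f q.1 q.2)
    (hfC2 : ∀ x ∈ Set.Ioo (0 : ℝ) 1, ContDiff ℝ 2 (f x))
    (L0 Cf1 Cf2 L2 : ℝ)
    (hf0 : ∀ x ∈ Set.Ioo (0 : ℝ) 1, ∀ a b : ℝ, |f x a - f x b| ≤ L0 * |a - b|)
    (hf1 : ∀ x ∈ Set.Ioo (0 : ℝ) 1, ∀ a : ℝ, |deriv (f x) a| ≤ Cf1)
    (hf2 : ∀ x ∈ Set.Ioo (0 : ℝ) 1, ∀ a : ℝ, |deriv (deriv (f x)) a| ≤ Cf2)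
    (hf2lip : ∀ x ∈ Set.Ioo (0 : ℝ) 1, ∀ a b : ℝ,
      |deriv (deriv (f x)) a - deriv (deriv (f x)) b| ≤ L2 * |a - b|)
    -- the Nemytskii operator `F : V → L²((0,1))`:
    (F : V → Lp ℝ 2 (volume.restrict (Set.Ioo (0 : ℝ) 1)))
    (hF : ∀ v : V,
      (F v : ℝ → ℝ) =ᵐ[volume.restrict (Set.Ioo (0 : ℝ) 1)] fun x => f x (J v x)) :
    ∃ D : V → (V →L[ℝ] Lp ℝ 2 (volume.restrict (Set.Ioo (0 : ℝ) 1))),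
    ∃ D2 : V → (V →L[ℝ] V →L[ℝ] Lp ℝ 2 (volume.restrict (Set.Ioo (0 : ℝ) 1))),
      -- `F` is Fréchet differentiable with the asserted derivative:
      (∀ v : V, HasFDerivAt F (D v) v) ∧
      (∀ v h : V, (D v h : ℝ → ℝ) =ᵐ[volume.restrict (Set.Ioo (0 : ℝ) 1)]
        fun x => deriv (f x) (J v x) * J h x) ∧
      -- `F` is twice Fréchet differentiable with the asserted second derivative:
      (∀ v : V, HasFDerivAt D (D2 v) v) ∧
      (∀ v h g : V, (D2 v h g : ℝ → ℝ) =ᵐ[volume.restrict (Set.Ioo (0 : ℝ) 1)]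
        fun x => deriv (deriv (f x)) (J v x) * J h x * J g x) ∧
      -- uniform bound on `F''`:
      (∀ v : V, ‖D2 v‖ ≤ Cf2 * C4 ^ 2) ∧
      -- `F''` is globally Lipschitz, i.e. `F ∈ Lip²(H_r, L²)`:
      (∃ K : ℝ, ∀ v w : V, ‖D2 v - D2 w‖ ≤ K * ‖v - w‖) :=
  stmt17_nemytskii_C2_general V J C2 C4 C6 hJ2 hJ4 hJ6 f hfc hfC2 Cf1 Cf2 L2 hf1 hf2 hf2lip F hF
end
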